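/- arXiv:1907.03368 — 2 statements merged into one kernel-verified Lean document; each statement's English description precedes it below -/
import Mathlib

section
/- Let X : [0,1] → H(2) be a smooth curve of 2×2 Hermitian matrices with X(0)=0, X(1)=diag(α,β) with α,β ≥ 0, whose length ∫₀¹‖X'(t)‖₁ dt equals ‖X(1)‖₁ (i.e., X is a minimal curve for the trace norm). Then X'(t) ≥ 0 (positive semidefinite) for all t ∈ [0,1]. -/
open scoped ComplexOrder

/-- The trace norm (Schatten 1-norm) of a complex matrix: `‖A‖₁ = tr |A|`. -/
noncomputable def traceNorm {m p : Type*} [Fintype m] [Fintype p] [DecidableEq p]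
    (A : Matrix m p ℂ) : ℝ :=
  (((Matrix.posSemidef_conjTranspose_mul_self A).1.eigenvectorUnitary : Matrix p p ℂ) *
      Matrix.diagonal ((fun x : ℝ => (x : ℂ)) ∘ Real.sqrt ∘ (Matrix.posSemidef_conjTranspose_mul_self A).1.eigenvalues) *
      (star (Matrix.posSemidef_conjTranspose_mul_self A).1.eigenvectorUnitary : Matrix p p ℂ)).trace.re


namespace Aux

open Matrix

variable {n : Type*} [Fintype n] [DecidableEq n]

lemma conj_mul_conj (U : Matrix n n ℂ) (hU : star U * U = 1) (d e : n → ℂ) :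
    (U * diagonal d * star U) * (U * diagonal e * star U) = U * diagonal (d * e) * star U := by
  have key : U * diagonal d * star U * (U * diagonal e * star U)
      = U * (diagonal d * ((star U * U) * (diagonal e * star U))) := by
    simp only [mul_assoc]
  rw [key, hU, one_mul, ← mul_assoc, ← mul_assoc, mul_assoc U (diagonal d) (diagonal e),
    diagonal_mul_diagonal]
  rfl

lemma trace_conj (U : Matrix n n ℂ) (hU : star U * U = 1) (d : n → ℂ) :
    (U * diagonal d * star U).trace = ∑ i, d i := by
  rw [trace_mul_cycle, hU, one_mul, trace_diagonal]

lemma traceNorm_eq_sum_abs {A : Matrix n n ℂ} (hA : A.IsHermitian) :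
    traceNorm A = ∑ i, |hA.eigenvalues i| := by
  set U : Matrix n n ℂ := (hA.eigenvectorUnitary : Matrix n n ℂ) with hUdef
  have hU : star U * U = 1 := mem_unitaryGroup_iff'.mp hA.eigenvectorUnitary.2
  set d : n → ℂ := RCLike.ofReal ∘ hA.eigenvalues with hddef
  have hAspec : A = U * diagonal d * star U := hA.spectral_theorem
  set B : Matrix n n ℂ := U * diagonal (fun i => (Complex.ofReal |hA.eigenvalues i|)) * star U
    with hBdef
  have hBpsd : B.PosSemidef := by
    refine (posSemidef_diagonal_iff.mpr fun i => ?_).mul_mul_conjTranspose_same U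
    simpa using abs_nonneg (hA.eigenvalues i)
  have hsq : B ^ 2 = Aᴴ * A := by
    have h2 : Aᴴ * A = U * diagonal (d * d) * star U := by
      rw [hA.eq]
      conv_lhs => rw [hAspec]
      exact conj_mul_conj U hU d d
    have hm : ((fun i => (Complex.ofReal |hA.eigenvalues i|)) *
        fun i => (Complex.ofReal |hA.eigenvalues i|)) = d * d := by
      funext i
      show (Complex.ofReal |hA.eigenvalues i|) * (Complex.ofReal |hA.eigenvalues i|)
          = ((hA.eigenvalues i : ℝ) : ℂ) * ((hA.eigenvalues i : ℝ) : ℂ)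
      norm_cast
      exact abs_mul_abs_self _
    rw [pow_two, hBdef, conj_mul_conj U hU, h2, hm]
  have e1 : traceNorm A
      = ((posSemidef_conjTranspose_mul_self A).1.cfc Real.sqrt).trace.re := rfl
  have hsa : IsSelfAdjoint A := hA
  have e2 : cfc (fun x : ℝ => x * x) A = A * A := by
    rw [cfc_mul (fun x : ℝ => x) (fun x : ℝ => x) A, cfc_id' ℝ A]
  have e3 : cfc Real.sqrt (A * A) = cfc (fun x : ℝ => |x|) A := by
    rw [← e2, ← cfc_comp' Real.sqrt (fun x : ℝ => x * x) A]
    simp only [Real.sqrt_mul_self_eq_abs]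
  rw [e1, ← IsHermitian.cfc_eq, hA.eq, e3, hA.cfc_eq]
  show ((U * diagonal (RCLike.ofReal ∘ (fun x : ℝ => |x|) ∘ hA.eigenvalues) * star U).trace).re = _
  rw [trace_conj U hU]
  simp [Complex.re_sum]

lemma trace_eq_sum {A : Matrix n n ℂ} (hA : A.IsHermitian) :
    A.trace = ∑ i, (hA.eigenvalues i : ℂ) := by
  set U : Matrix n n ℂ := (hA.eigenvectorUnitary : Matrix n n ℂ)
  have hU : star U * U = 1 := mem_unitaryGroup_iff'.mp hA.eigenvectorUnitary.2
  set d : n → ℂ := RCLike.ofReal ∘ hA.eigenvalues with hddef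
  have hAspec : A = U * diagonal d * star U := hA.spectral_theorem
  conv_lhs => rw [hAspec]
  rw [trace_conj U hU]
  rfl

lemma trace_sq_eq_sum {A : Matrix n n ℂ} (hA : A.IsHermitian) :
    (A * A).trace = ∑ i, ((hA.eigenvalues i : ℂ)) ^ 2 := by
  set U : Matrix n n ℂ := (hA.eigenvectorUnitary : Matrix n n ℂ)
  have hU : star U * U = 1 := mem_unitaryGroup_iff'.mp hA.eigenvectorUnitary.2
  set d : n → ℂ := RCLike.ofReal ∘ hA.eigenvalues with hddef
  have hAspec : A = U * diagonal d * star U := hA.spectral_theorem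
  conv_lhs => rw [hAspec]
  rw [conj_mul_conj U hU, trace_conj U hU]
  congr 1
  funext i
  simp [pow_two, hddef]

lemma re_trace_eq_sum {A : Matrix n n ℂ} (hA : A.IsHermitian) :
    A.trace.re = ∑ i, hA.eigenvalues i := by
  rw [trace_eq_sum hA]
  simp [Complex.re_sum]

lemma re_trace_sq_eq_sum {A : Matrix n n ℂ} (hA : A.IsHermitian) :
    ((A * A).trace).re = ∑ i, (hA.eigenvalues i) ^ 2 := by
  rw [trace_sq_eq_sum hA]
  simp [Complex.re_sum, ← Complex.ofReal_pow]

lemma re_trace_le_traceNorm {A : Matrix n n ℂ} (hA : A.IsHermitian) :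
    A.trace.re ≤ traceNorm A := by
  rw [re_trace_eq_sum hA, traceNorm_eq_sum_abs hA]
  exact Finset.sum_le_sum fun i _ => le_abs_self _

lemma posSemidef_of_traceNorm_eq_trace {A : Matrix n n ℂ} (hA : A.IsHermitian)
    (h : traceNorm A = A.trace.re) : A.PosSemidef := by
  apply hA.posSemidef_iff_eigenvalues_nonneg.mpr
  have h2 : ∑ i, (|hA.eigenvalues i| - hA.eigenvalues i) = 0 := by
    rw [Finset.sum_sub_distrib, ← traceNorm_eq_sum_abs hA, h, re_trace_eq_sum hA, sub_self]
  intro i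
  have h3 := (Finset.sum_eq_zero_iff_of_nonneg
    (fun i _ => sub_nonneg.mpr (le_abs_self (hA.eigenvalues i)))).mp h2 i (Finset.mem_univ i)
  have := abs_nonneg (hA.eigenvalues i)
  change (0:ℝ) ≤ hA.eigenvalues i
  linarith

end Aux

namespace Aux2
open Matrix Aux

lemma abs_add_abs_eq (a b : ℝ) : |a| + |b| = max |a + b| |a - b| := by
  rcases le_total 0 a with ha | ha <;> rcases le_total 0 b with hb | hb
  · rw [abs_of_nonneg ha, abs_of_nonneg hb, abs_of_nonneg (show (0:ℝ) ≤ a + b by linarith),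
      max_eq_left (abs_le.mpr ⟨by linarith, by linarith⟩)]
  · rw [abs_of_nonneg ha, abs_of_nonpos hb, abs_of_nonneg (show (0:ℝ) ≤ a - b by linarith),
      max_eq_right (abs_le.mpr ⟨by linarith, by linarith⟩)]
    ring
  · rw [abs_of_nonpos ha, abs_of_nonneg hb, abs_of_nonpos (show a - b ≤ 0 by linarith),
      max_eq_right (abs_le.mpr ⟨by linarith, by linarith⟩)]
    ring
  · rw [abs_of_nonpos ha, abs_of_nonpos hb, abs_of_nonpos (show a + b ≤ 0 by linarith),
      max_eq_left (abs_le.mpr ⟨by linarith, by linarith⟩)]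
    ring

lemma traceNorm_eq_max {A : Matrix (Fin 2) (Fin 2) ℂ} (hA : A.IsHermitian) :
    traceNorm A
      = max |A.trace.re| (Real.sqrt (2 * ((A * A).trace).re - A.trace.re ^ 2)) := by
  rw [traceNorm_eq_sum_abs hA, re_trace_eq_sum hA, re_trace_sq_eq_sum hA, Fin.sum_univ_two,
    Fin.sum_univ_two, Fin.sum_univ_two]
  set a := hA.eigenvalues 0
  set b := hA.eigenvalues 1
  have h : 2 * (a ^ 2 + b ^ 2) - (a + b) ^ 2 = (a - b) ^ 2 := by ring
  rw [h, Real.sqrt_sq_eq_abs, abs_add_abs_eq]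

end Aux2

/-- If `X : [0,1] → H(2)` is a smooth minimal curve (for the trace norm) joining `0`
to `diag(α, β)` with `α, β ≥ 0`, then `X'(t) ≥ 0` for all `t ∈ [0,1]`. -/
theorem deriv_posSemidef_of_minimal_nonneg_diag
    (X X' : ℝ → Matrix (Fin 2) (Fin 2) ℂ) (α β : ℝ)
    (hsmooth : ∀ i j, ContDiff ℝ (⊤ : ℕ∞) fun t => X t i j)
    (hderiv : ∀ t i j, HasDerivAt (fun s => X s i j) (X' t i j) t)
    (hherm : ∀ t, (X t).IsHermitian)
    (h0 : X 0 = 0) (h1 : X 1 = Matrix.diagonal ![(α : ℂ), (β : ℂ)])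
    (hα : 0 ≤ α) (hβ : 0 ≤ β)
    (hmin : (∫ t in (0:ℝ)..1, traceNorm (X' t)) = traceNorm (X 1)) :
    ∀ t ∈ Set.Icc (0:ℝ) 1, (X' t).PosSemidef := by
  have hX'herm : ∀ t, (X' t).IsHermitian := by
    intro t
    apply Matrix.IsHermitian.ext
    intro i j
    have h1 : HasDerivAt (fun u => star (X u j i)) (star (X' t j i)) t := (hderiv t j i).star
    have h2 : (fun u => star (X u j i)) = fun u => X u i j :=
      funext fun u => (hherm u).apply i j
    rw [h2] at h1
    exact h1.unique (hderiv t i j)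
  have hc : ∀ i j, Continuous fun t => X' t i j := by
    intro i j
    have h1 : (fun t => X' t i j) = deriv fun u => X u i j :=
      funext fun t => ((hderiv t i j).deriv).symm
    rw [h1]
    exact (hsmooth i j).continuous_deriv (by simp)
  have hX'c : Continuous X' := continuous_matrix fun i j => hc i j
  set s : ℝ → ℝ := fun t => ((X' t).trace).re with hsdef
  set q : ℝ → ℝ := fun t => (((X' t) * (X' t)).trace).re with hqdef
  set F : ℝ → ℝ := fun t => max |s t| (Real.sqrt (2 * q t - s t ^ 2)) with hFdef
  have hFs : ∀ u, traceNorm (X' u) = F u := fun u => Aux2.traceNorm_eq_max (hX'herm u)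
  have hscont : Continuous s := Complex.continuous_re.comp hX'c.matrix_trace
  have hqcont : Continuous q :=
    Complex.continuous_re.comp (hX'c.matrix_mul hX'c).matrix_trace
  have hFcont : Continuous F :=
    (continuous_abs.comp hscont).max
      (Real.continuous_sqrt.comp ((continuous_const.mul hqcont).sub (hscont.pow 2)))
  have hTd : ∀ u, HasDerivAt (fun r => ((X r).trace).re) (s u) u := by
    intro u
    have hd1 : HasDerivAt (fun r => (X r).trace) ((X' u).trace) u := by
      simp only [Matrix.trace_fin_two]
      exact (hderiv u 0 0).add (hderiv u 1 1)
    have hd2 := Complex.reCLM.hasFDerivAt.comp_hasDerivAt u hd1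
    exact hd2
  have hInt : ∫ u in (0:ℝ)..1, s u = α + β := by
    rw [intervalIntegral.integral_eq_sub_of_hasDerivAt (fun u _ => hTd u)
      (hscont.intervalIntegrable 0 1), h0, h1]
    simp [Matrix.trace_diagonal, Fin.sum_univ_two]
  have hHerm1 : (Matrix.diagonal ![(α : ℂ), (β : ℂ)]).IsHermitian := by
    refine Matrix.isHermitian_diagonal_iff.mpr fun i => ?_
    fin_cases i <;> simp [IsSelfAdjoint, Complex.conj_ofReal]
  have hX1 : traceNorm (X 1) = α + β := by
    rw [h1, Aux2.traceNorm_eq_max hHerm1]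
    have h1t : (Matrix.diagonal ![(α : ℂ), (β : ℂ)]).trace = (α : ℂ) + β := by
      simp [Matrix.trace_diagonal, Fin.sum_univ_two]
    have h2t : (Matrix.diagonal ![(α : ℂ), (β : ℂ)] * Matrix.diagonal ![(α : ℂ), (β : ℂ)]).trace
        = (α : ℂ) ^ 2 + (β : ℂ) ^ 2 := by
      rw [Matrix.diagonal_mul_diagonal]
      simp [Matrix.trace_diagonal, Fin.sum_univ_two, pow_two]
    rw [h1t, h2t]
    have hre1 : ((α : ℂ) + β).re = α + β := by simp
    have hre2 : ((α : ℂ) ^ 2 + (β : ℂ) ^ 2).re = α ^ 2 + β ^ 2 := by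
      push_cast; simp [← Complex.ofReal_pow]
    rw [hre1, hre2]
    have hring : 2 * (α ^ 2 + β ^ 2) - (α + β) ^ 2 = (α - β) ^ 2 := by ring
    rw [hring, Real.sqrt_sq_eq_abs, abs_of_nonneg (by linarith),
      max_eq_left (abs_le.mpr ⟨by linarith, by linarith⟩)]
  have hmin' : ∫ u in (0:ℝ)..1, F u = α + β := by
    rw [← hX1, ← hmin]
    exact intervalIntegral.integral_congr fun u _ => (hFs u).symm
  have hsleF : ∀ u, s u ≤ F u := fun u => by
    rw [← hFs u]; exact Aux.re_trace_le_traceNorm (hX'herm u)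
  intro t ht
  apply Aux.posSemidef_of_traceNorm_eq_trace (hX'herm t)
  have hzero : F t - s t = 0 := by
    by_contra hne
    have hpos : 0 < F t - s t := lt_of_le_of_ne (sub_nonneg.mpr (hsleF t)) (Ne.symm hne)
    have hip : 0 < ∫ r in (0:ℝ)..1, (F r - s r) :=
      intervalIntegral.integral_pos zero_lt_one ((hFcont.sub hscont).continuousOn)
        (fun x _ => sub_nonneg.mpr (hsleF x)) ⟨t, ht, hpos⟩
    rw [intervalIntegral.integral_sub (hFcont.intervalIntegrable 0 1)
      (hscont.intervalIntegrable 0 1), hmin', hInt, sub_self] at hip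
    exact lt_irrefl 0 hip
  rw [hFs t]
  linarith [hzero]
end

section
/- For any n×n complex matrices X and Y, the derivative of the matrix exponential satisfies De^X(Y) = ∫₀¹ e^{tX} Y e^{(1−t)X} dt, where De^X denotes the Fréchet derivative of the exponential map at X. -/
/-!
Along the line `h ↦ X + h • Y`, Duhamel's formula
`exp A - exp B = ∫₀¹ exp (s • A) * (A - B) * exp ((1 - s) • B)` (the fundamental theorem of
calculus for `s ↦ exp (s • A) * exp ((1 - s) • B)`) exhibits `exp (X + h • Y) - exp X` as `h` times
an integral depending continuously on `h`. So the difference quotient converges to the value of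
that integral at `h = 0`, which is the directional derivative of `exp` at `X` in direction `Y`.
-/

attribute [local instance] Matrix.linftyOpNormedAddCommGroup Matrix.linftyOpNormedSpace
  Matrix.linftyOpNormedRing Matrix.linftyOpNormedAlgebra

open NormedSpace

section Duhamel

variable {𝔸 : Type*} [NormedRing 𝔸] [NormedAlgebra ℝ 𝔸] [CompleteSpace 𝔸]

@[fun_prop]
theorem continuous_exp_of_normedAlgebra_real : Continuous (exp : 𝔸 → 𝔸) :=
  continuous_iff_continuousAt.2 fun x => (exp_analytic (𝕂 := ℝ) x).continuousAt

theorem continuous_exp_smul_mul_mul_exp_one_sub_smul (A B C : 𝔸) :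
    Continuous fun s : ℝ => exp (s • A) * C * exp ((1 - s) • B) := by
  fun_prop

theorem hasDerivAt_exp_smul_mul_exp_one_sub_smul (A B : 𝔸) (s : ℝ) :
    HasDerivAt (fun s : ℝ => exp (s • A) * exp ((1 - s) • B))
      (exp (s • A) * (A - B) * exp ((1 - s) • B)) s := by
  have hA : HasDerivAt (fun s : ℝ => exp (s • A)) (exp (s • A) * A) s :=
    hasDerivAt_exp_smul_const A s
  have hB : HasDerivAt (fun s : ℝ => exp ((1 - s) • B)) (-(B * exp ((1 - s) • B))) s :=
    ((hasDerivAt_exp_smul_const' B (1 - s)).scomp s ((hasDerivAt_id s).const_sub 1)).congr_deriv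
      (by simp)
  refine (hA.mul hB).congr_deriv ?_
  noncomm_ring

theorem exp_sub_exp_eq_intervalIntegral (A B : 𝔸) :
    exp A - exp B = ∫ s in (0:ℝ)..1, exp (s • A) * (A - B) * exp ((1 - s) • B) := by
  rw [intervalIntegral.integral_eq_sub_of_hasDerivAt
    (fun s _ => hasDerivAt_exp_smul_mul_exp_one_sub_smul A B s)
    ((continuous_exp_smul_mul_mul_exp_one_sub_smul A B _).intervalIntegrable 0 1)]
  simp

theorem exp_add_smul_sub_exp (X Y : 𝔸) (h : ℝ) :
    exp (X + h • Y) - exp X =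
      h • ∫ s in (0:ℝ)..1, exp (s • (X + h • Y)) * Y * exp ((1 - s) • X) := by
  rw [exp_sub_exp_eq_intervalIntegral, add_sub_cancel_left, ← intervalIntegral.integral_smul]
  simp only [mul_smul_comm, smul_mul_assoc]

theorem hasDerivAt_exp_add_smul (X Y : 𝔸) :
    HasDerivAt (fun h : ℝ => exp (X + h • Y))
      (∫ s in (0:ℝ)..1, exp (s • X) * Y * exp ((1 - s) • X)) 0 := by
  set G : ℝ → 𝔸 := fun h => ∫ s in (0:ℝ)..1, exp (s • (X + h • Y)) * Y * exp ((1 - s) • X)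
  have hG : Continuous G :=
    intervalIntegral.continuous_parametric_intervalIntegral_of_continuous'
      (by fun_prop) 0 1
  have hG0 : G 0 = ∫ s in (0:ℝ)..1, exp (s • X) * Y * exp ((1 - s) • X) := by
    simp only [G, zero_smul, add_zero]
  rw [hasDerivAt_iff_tendsto_slope, ← hG0]
  refine ((hG.tendsto 0).mono_left nhdsWithin_le_nhds).congr' ?_
  filter_upwards [self_mem_nhdsWithin] with h (h0 : h ≠ 0)
  rw [slope_def_module, sub_zero, zero_smul, add_zero, exp_add_smul_sub_exp, inv_smul_smul₀ h0]

theorem fderiv_exp_apply (X Y : 𝔸) :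
    fderiv ℝ exp X Y = ∫ s in (0:ℝ)..1, exp (s • X) * Y * exp ((1 - s) • X) :=
  ((exp_analytic X).differentiableAt.hasFDerivAt.hasLineDerivAt Y).unique
    (hasDerivAt_exp_add_smul X Y)

end Duhamel

/-- The Fréchet derivative of the matrix exponential:
`De^X(Y) = ∫₀¹ e^{tX} Y e^{(1-t)X} dt` (stated entrywise). -/
theorem fderiv_matrix_exp {n : ℕ} (X Y : Matrix (Fin n) (Fin n) ℂ) :
    ∀ i j, fderiv ℝ (NormedSpace.exp) X Y i j =
      ∫ t in (0:ℝ)..1,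
        (NormedSpace.exp (t • X) * Y * NormedSpace.exp ((1 - t) • X)) i j := by
  intro i j
  -- not `rw`: the statement's `fderiv` carries the product topology on matrices, which is only
  -- definitionally equal to the one induced by the norm
  refine (congrFun (congrFun (fderiv_exp_apply X Y) i) j).trans ?_
  exact ((Matrix.entryLinearMap ℝ ℂ i j).toContinuousLinearMap.intervalIntegral_comp_comm
    ((continuous_exp_smul_mul_mul_exp_one_sub_smul X X Y).intervalIntegrable 0 1)).symm
end
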